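/- arXiv:2111.03280 — 3 statements merged into one kernel-verified Lean document; each statement's English description precedes it below -/
import Mathlib

section
/- Let r > 1 and ψ, ρ real with ρ ∈ (−π/2, π/2), ψ + ρ ∈ (−π/2, π/2), and tan ρ = sin ψ/(r − cos ψ). Then tan(ψ/2 + ρ) = ((r+1)/(r−1))·tan(ψ/2). -/
open Real

/-- Relation tan(ψ/2 + ρ) = ((r+1)/(r−1))·tan(ψ/2). -/
theorem stmt_7 (r ψ ρ : ℝ) (hr : 1 < r)
    (hρ : ρ ∈ Set.Ioo (-(π / 2)) (π / 2))
    (hψρ : ψ + ρ ∈ Set.Ioo (-(π / 2)) (π / 2))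
    (htan : tan ρ = sin ψ / (r - cos ψ)) :
    tan (ψ / 2 + ρ) = ((r + 1) / (r - 1)) * tan (ψ / 2) := by
  obtain ⟨h1, h2⟩ := hρ
  obtain ⟨h3, h4⟩ := hψρ
  have hcρ : 0 < cos ρ := Real.cos_pos_of_mem_Ioo ⟨h1, h2⟩
  have hch : 0 < cos (ψ / 2) :=
    Real.cos_pos_of_mem_Ioo ⟨by linarith, by linarith⟩
  have hchρ : 0 < cos (ψ / 2 + ρ) :=
    Real.cos_pos_of_mem_Ioo ⟨by linarith, by linarith⟩
  have hrc : r - cos ψ > 0 := by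
    have := Real.cos_le_one ψ; linarith
  have hrel : sin ρ * (r - cos ψ) = sin ψ * cos ρ := by
    rw [Real.tan_eq_sin_div_cos] at htan
    field_simp at htan
    linarith [htan]
  have hs : sin ψ = 2 * sin (ψ / 2) * cos (ψ / 2) := by
    rw [← Real.sin_two_mul]; ring_nf
  have hc : cos ψ = 2 * cos (ψ / 2) ^ 2 - 1 := by
    rw [← Real.cos_two_mul]; ring_nf
  have hpy : sin (ψ / 2) ^ 2 + cos (ψ / 2) ^ 2 = 1 := Real.sin_sq_add_cos_sq _
  have hd : 0 < cos (ψ / 2) * cos ρ - sin (ψ / 2) * sin ρ := by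
    rw [← Real.cos_add]; exact hchρ
  rw [Real.tan_eq_sin_div_cos, Real.tan_eq_sin_div_cos, Real.sin_add, Real.cos_add]
  rw [hs, hc] at hrel
  have hr1 : (r : ℝ) - 1 ≠ 0 := by linarith
  have hd2 : (r - 1) * cos (ψ / 2) ≠ 0 := by positivity
  rw [div_mul_div_comm, div_eq_div_iff hd.ne' hd2]
  linear_combination hrel + sin ρ * (r + 1) * hpy
end

section
/- Let α, β_L, β_R, γ, δ_L, δ_R satisfy the configuration assumptions. Then tan∠B_LCB' = sin(β_L − δ_L)/((sin α/sin(β_R + γ/2))·(sin(γ/2 + δ_R)/sin(γ + δ_L + δ_R)) + cos(β_L − δ_L)). -/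
open Real EuclideanGeometry

/-! In the triangle `B_L B' C` the angle at `B'` is `(β_L - δ_L) - θ`, so the law of sines gives
`c_L / b_L = sin ((β_L - δ_L) - θ) / sin θ`, which rearranges to the formula for `tan θ`. The
ratio `c_L / b_L` is computed by the law of sines in the triangles `B_L B' B_R` and `B_L C B_R`,
which share the side `B_L B_R`. -/

theorem Real.tan_eq_sin_div_sin_add_div_sin_sub_cos {φ θ : ℝ} (hφ : sin φ ≠ 0) (hθ : sin θ ≠ 0) :
    tan θ = sin φ / (sin (φ + θ) / sin θ - cos φ) := by
  have hden : sin (φ + θ) / sin θ - cos φ = sin φ * cos θ / sin θ := by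
    rw [sin_add]
    field_simp
    ring
  rw [hden, tan_eq_sin_div_cos, div_div_eq_mul_div, mul_div_mul_left _ _ hφ]

namespace EuclideanGeometry

variable {V P : Type*} [NormedAddCommGroup V] [InnerProductSpace ℝ V] [MetricSpace P]
  [NormedAddTorsor V P]

theorem tan_angle_eq_sin_angle_div_dist_div_dist_sub_cos_angle {p₁ p₂ p₃ : P} (h : p₁ ≠ p₂)
    (h₁ : sin (∠ p₂ p₁ p₃) ≠ 0) (h₃ : sin (∠ p₁ p₃ p₂) ≠ 0) :
    tan (∠ p₁ p₃ p₂) =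
      sin (∠ p₂ p₁ p₃) / (dist p₁ p₃ / dist p₁ p₂ - cos (∠ p₂ p₁ p₃)) := by
  have hsum := angle_add_angle_add_angle_eq_pi p₃ h.symm
  have hsin : sin (∠ p₁ p₂ p₃) = sin (∠ p₂ p₁ p₃ + ∠ p₁ p₃ p₂) := by
    rw [← sin_pi_sub, angle_comm p₂ p₁ p₃, angle_comm p₁ p₃ p₂]
    congr 1
    linarith
  have hratio : dist p₁ p₃ / dist p₁ p₂ = sin (∠ p₂ p₁ p₃ + ∠ p₁ p₃ p₂) / sin (∠ p₁ p₃ p₂) := by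
    rw [div_eq_div_iff (dist_ne_zero.2 h) h₃, ← hsin, angle_comm p₁ p₃ p₂, dist_comm p₁ p₃]
    linear_combination law_sin p₂ p₃ p₁
  rw [hratio]
  exact tan_eq_sin_div_sin_add_div_sin_sub_cos h₁ h₃

theorem dist_div_dist_eq_sin_angle_div_sin_angle_mul_sin_angle_div_sin_angle {p a q c : P}
    (h : p ≠ a) (ha : sin (∠ a q p) ≠ 0) (hc : sin (∠ p c q) ≠ 0) :
    dist p c / dist p a = (sin (∠ p a q) / sin (∠ a q p)) * (sin (∠ c q p) / sin (∠ p c q)) := by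
  have hqa := law_sin a q p
  have hqc := law_sin c q p
  rw [div_mul_div_comm, div_eq_div_iff (dist_ne_zero.2 h) (mul_ne_zero ha hc)]
  linear_combination sin (∠ c q p) * hqa - sin (∠ a q p) * hqc

end EuclideanGeometry

theorem stmt_15_general (BL BR B' C : EuclideanSpace ℝ (Fin 2))
    (α βL βR γ δL δR : ℝ)
    (hγ : γ ∈ Set.Ioo 0 π)
    (hδL : δL ∈ Set.Ico 0 (π / 2)) (hδR : δR ∈ Set.Ico 0 (π / 2))
    (hsum : γ + δL + δR < π)
    (hβL : βL - δL ∈ Set.Ioo 0 π)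
    (hβRγ : βR + γ / 2 ∈ Set.Ioo 0 π)
    (h1 : BL ≠ B')
    (hangBL : ∠ B' BL C = π - (βL - δL))
    (hangB' : ∠ BL B' BR = π - α)
    (hangBR : ∠ B' BR BL = βR + γ / 2)
    (hangC : ∠ BL C BR = π - (γ + δL + δR))
    (hangBRC : ∠ C BR BL = γ / 2 + δR)
    (hθ : ∠ BL C B' ∈ Set.Ioo 0 (π / 2)) :
    tan (∠ BL C B') =
      sin (βL - δL) /
        ((sin α / sin (βR + γ / 2)) * (sin (γ / 2 + δR) / sin (γ + δL + δR))
          + cos (βL - δL)) := by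
  have hsinBL : sin (∠ B' BL C) ≠ 0 := by
    rw [hangBL, sin_pi_sub]
    exact (sin_pos_of_pos_of_lt_pi hβL.1 hβL.2).ne'
  have hsinC : sin (∠ BL C B') ≠ 0 :=
    (sin_pos_of_pos_of_lt_pi hθ.1 (by linarith [hθ.2, pi_pos])).ne'
  have hsinBR : sin (∠ B' BR BL) ≠ 0 := by
    rw [hangBR]
    exact (sin_pos_of_pos_of_lt_pi hβRγ.1 hβRγ.2).ne'
  have hsinC' : sin (∠ BL C BR) ≠ 0 := by
    rw [hangC, sin_pi_sub]
    exact (sin_pos_of_pos_of_lt_pi (by linarith [hγ.1, hδL.1, hδR.1]) hsum).ne'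
  rw [tan_angle_eq_sin_angle_div_dist_div_dist_sub_cos_angle h1 hsinBL hsinC,
    dist_div_dist_eq_sin_angle_div_sin_angle_mul_sin_angle_div_sin_angle h1 hsinBR hsinC',
    hangBL, hangB', hangBR, hangC, hangBRC, sin_pi_sub, sin_pi_sub, sin_pi_sub, cos_pi_sub,
    sub_neg_eq_add]

/-- Proposition 3.9: formula for tan ∠B_LCB' in the configuration. -/
theorem stmt_15 (BL BR B' C : EuclideanSpace ℝ (Fin 2))
    (α βL βR γ δL δR : ℝ)
    (hα : α ∈ Set.Ioo 0 π) (hγ : γ ∈ Set.Ioo 0 π)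
    (hδL : δL ∈ Set.Ico 0 (π / 2)) (hδR : δR ∈ Set.Ico 0 (π / 2))
    (hsum : γ + δL + δR < π)
    (hβL : βL - δL ∈ Set.Ioo 0 π)
    (hβRγ : βR + γ / 2 ∈ Set.Ioo 0 π)
    (h1 : BL ≠ B') (h2 : BR ≠ B') (h3 : BL ≠ BR) (h4 : BL ≠ C) (h5 : BR ≠ C)
    (h6 : B' ≠ C)
    (hangBL : ∠ B' BL C = π - (βL - δL))
    (hangB' : ∠ BL B' BR = π - α)
    (hangBR : ∠ B' BR BL = βR + γ / 2)
    (hangC : ∠ BL C BR = π - (γ + δL + δR))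
    (hangBRC : ∠ C BR BL = γ / 2 + δR)
    (hθ : ∠ BL C B' ∈ Set.Ioo 0 (π / 2)) :
    tan (∠ BL C B') =
      sin (βL - δL) /
        ((sin α / sin (βR + γ / 2)) * (sin (γ / 2 + δR) / sin (γ + δL + δR))
          + cos (βL - δL)) :=
  stmt_15_general BL BR B' C α βL βR γ δL δR hγ hδL hδR hsum hβL hβRγ h1 hangBL hangB' hangBR hangC
    hangBRC hθ
end

section
/- Let r > 1, ψ ∈ (−π, π) and let τ = tan(π/2 − β − γ'/2) with sin(β + γ'/2) > 0. If t = tan(ψ/2) satisfies τ = ((r+1)/(r−1))·t, and ρ is defined by tan ρ = sin ψ/(r − cos ψ) with ρ ∈ (−π/2, π/2), then tan ρ = sin(2β + γ')/(r − cos(2β + γ')). -/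
open Real

/-- Proposition 2.6: if τ = tan(π/2 − β − γ'/2) = ((r+1)/(r−1))·tan(ψ/2) and
tan ρ = sin ψ/(r − cos ψ), then tan ρ = sin(2β + γ')/(r − cos(2β + γ')). -/
theorem stmt_17 (r ψ ρ β γ' τ : ℝ) (hr : 1 < r)
    (hψ : ψ ∈ Set.Ioo (-π) π)
    (hsin : 0 < sin (β + γ' / 2))
    (hτ : τ = tan (π / 2 - β - γ' / 2))
    (hrel : τ = ((r + 1) / (r - 1)) * tan (ψ / 2))
    (hρ : ρ ∈ Set.Ioo (-(π / 2)) (π / 2))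
    (htan : tan ρ = sin ψ / (r - cos ψ)) :
    tan ρ = sin (2 * β + γ') / (r - cos (2 * β + γ')) := by
  obtain ⟨hψ1, hψ2⟩ := hψ
  have hpi := Real.pi_pos
  set θ := β + γ' / 2 with hθdef
  have hsθ : sin θ ≠ 0 := ne_of_gt hsin
  have hcψ : 0 < cos (ψ / 2) := by
    apply Real.cos_pos_of_mem_Ioo
    constructor <;> [linarith; linarith]
  -- τ = cos θ / sin θ
  have hτ' : τ = cos θ / sin θ := by
    rw [hτ]
    have h1 : π / 2 - β - γ' / 2 = π / 2 - θ := by rw [hθdef]; ring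
    rw [h1, Real.tan_pi_div_two_sub, Real.tan_eq_sin_div_cos]
    rcases eq_or_ne (cos θ) 0 with hc | hc
    · simp [hc]
    · field_simp
  have hr1 : r - 1 ≠ 0 := by linarith
  have hE : (r - 1) * cos θ * cos (ψ / 2) = (r + 1) * sin θ * sin (ψ / 2) := by
    have h := hτ'.symm.trans hrel
    rw [Real.tan_eq_sin_div_cos] at h
    field_simp at h
    linarith [h]
  have hsψ : sin ψ = 2 * sin (ψ / 2) * cos (ψ / 2) := by
    rw [← Real.sin_two_mul]; ring_nf
  have hcψ2 : cos ψ = cos (ψ / 2) ^ 2 - sin (ψ / 2) ^ 2 := by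
    rw [← Real.cos_two_mul']; ring_nf
  have hs2 : sin (2 * β + γ') = 2 * sin θ * cos θ := by
    have : 2 * β + γ' = 2 * θ := by rw [hθdef]; ring
    rw [this, Real.sin_two_mul]
  have hc2 : cos (2 * β + γ') = cos θ ^ 2 - sin θ ^ 2 := by
    have : 2 * β + γ' = 2 * θ := by rw [hθdef]; ring
    rw [this, Real.cos_two_mul']
  have hd1 : r - cos ψ ≠ 0 := by
    have := Real.cos_le_one ψ; intro h; linarith
  have hd2 : r - cos (2 * β + γ') ≠ 0 := by
    have := Real.cos_le_one (2 * β + γ'); intro h; linarith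
  rw [htan, div_eq_div_iff hd1 hd2, hsψ, hcψ2, hs2, hc2]
  have hP1 : sin θ ^ 2 + cos θ ^ 2 = 1 := Real.sin_sq_add_cos_sq θ
  have hP2 : sin (ψ / 2) ^ 2 + cos (ψ / 2) ^ 2 = 1 := Real.sin_sq_add_cos_sq (ψ / 2)
  linear_combination (-2 * (sin θ * cos (ψ / 2) - cos θ * sin (ψ / 2))) * hE +
    (-2 * r * sin (ψ / 2) * cos (ψ / 2)) * hP1 + (2 * r * sin θ * cos θ) * hP2
end
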